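/- arXiv:gr-qc/0304080 — 3 statements merged into one kernel-verified Lean document; each statement's English description precedes it below -/
import Mathlib

section
/- Let y1, y2 be distinct points in ℝ³ and for x ∈ ℝ³ set r1 = |x − y1|, r2 = |x − y2|, r12 = |y1 − y2|, and g(x) = ln(r1 + r2 + r12). Then for every x outside the segment issues (precisely, for every x with x ≠ y1 and x ≠ y2 and r1 + r2 > r12), the flat-space Laplacian of g with respect to x equals 1/(r1·r2). -/
noncomputable section

abbrev E3 := EuclideanSpace ℝ (Fin 3)

def e3 (i : Fin 3) : E3 := EuclideanSpace.single i 1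

/-- Partial derivative in direction `i`. -/
def pd (i : Fin 3) (f : E3 → ℝ) (x : E3) : ℝ := fderiv ℝ f x (e3 i)

/-- Flat-space Laplacian. -/
def lap (f : E3 → ℝ) (x : E3) : ℝ := ∑ i, pd i (pd i f) x

/-! With `h = r₁ + r₂ + r₁₂` one has `Δ (log h) = Δh / h - |∇h|² / h²`. In `ℝ³`, `Δ rᵢ = 2 / rᵢ`,
and polarization `⟪x - y₁, x - y₂⟫ = (r₁² + r₂² - r₁₂²) / 2` gives
`|∇h|² = |∇r₁ + ∇r₂|² = ((r₁ + r₂)² - r₁₂²) / (r₁ r₂) = (r₁ + r₂ - r₁₂) h / (r₁ r₂)`.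
Hence `Δ (log h) = (2 (r₁ + r₂) - (r₁ + r₂ - r₁₂)) / (r₁ r₂ h) = 1 / (r₁ r₂)`. -/

open Filter Topology RealInnerProductSpace

section PartialDerivatives

variable {f g : E3 → ℝ} {x : E3}

lemma HasFDerivAt.pd_eq {f' : E3 →L[ℝ] ℝ} (hf : HasFDerivAt f f' x) (i : Fin 3) :
    pd i f x = f' (e3 i) := by
  rw [pd, hf.fderiv]

lemma Filter.EventuallyEq.pd_eq (h : f =ᶠ[𝓝 x] g) (i : Fin 3) : pd i f x = pd i g x := by
  rw [pd, pd, h.fderiv_eq]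

lemma inner_e3_right (v : E3) (i : Fin 3) : ⟪v, e3 i⟫ = v i := by
  simp [e3, EuclideanSpace.inner_single_right]

lemma pd_add (hf : DifferentiableAt ℝ f x) (hg : DifferentiableAt ℝ g x) (i : Fin 3) :
    pd i (fun z => f z + g z) x = pd i f x + pd i g x :=
  (hf.hasFDerivAt.add hg.hasFDerivAt).pd_eq i

lemma pd_add_const (c : ℝ) (i : Fin 3) : pd i (fun z => f z + c) = pd i f := by
  ext z
  simp only [pd, fderiv_add_const]

lemma pd_mul (hf : DifferentiableAt ℝ f x) (hg : DifferentiableAt ℝ g x) (i : Fin 3) :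
    pd i (fun z => f z * g z) x = pd i f x * g x + f x * pd i g x := by
  rw [(hf.hasFDerivAt.fun_mul hg.hasFDerivAt).pd_eq i, pd, pd]
  simp only [add_apply, smul_apply, smul_eq_mul]
  ring

lemma pd_inv (hf : DifferentiableAt ℝ f x) (hx : f x ≠ 0) (i : Fin 3) :
    pd i (fun z => (f z)⁻¹) x = -pd i f x / f x ^ 2 := by
  have h : HasFDerivAt (fun z => (f z)⁻¹) _ x :=
    (hasDerivAt_inv hx).comp_hasFDerivAt x hf.hasFDerivAt
  rw [h.pd_eq i, pd, smul_apply, smul_eq_mul]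
  ring

lemma pd_log (hf : DifferentiableAt ℝ f x) (hx : f x ≠ 0) (i : Fin 3) :
    pd i (fun z => Real.log (f z)) x = pd i f x * (f x)⁻¹ := by
  rw [(hf.hasFDerivAt.log hx).pd_eq i, pd, smul_apply, smul_eq_mul, mul_comm]

lemma pd_sub_const_apply (y : E3) (i : Fin 3) : pd i (fun z => (z - y) i) x = 1 := by
  have h : HasFDerivAt (fun z : E3 => (z - y) i) (EuclideanSpace.proj i : E3 →L[ℝ] ℝ) x := by
    simpa using ((EuclideanSpace.proj i : E3 →L[ℝ] ℝ).hasFDerivAt.sub_const (y i))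
  rw [h.pd_eq i]
  simp [e3]

lemma ContDiffAt.differentiableAt_pd (hf : ContDiffAt ℝ 2 f x) (i : Fin 3) :
    DifferentiableAt ℝ (pd i f) x :=
  ((hf.fderiv_right (m := 1) le_rfl).differentiableAt one_ne_zero).clm_apply
    (differentiableAt_const _)

lemma ContDiffAt.eventually_differentiableAt (hf : ContDiffAt ℝ 2 f x) :
    ∀ᶠ z in 𝓝 x, DifferentiableAt ℝ f z :=
  (hf.eventually (by simp)).mono fun _ hz => hz.differentiableAt (by norm_num)

end PartialDerivatives

section Laplacian

variable {f g : E3 → ℝ} {x : E3}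

lemma lap_add (hf : ContDiffAt ℝ 2 f x) (hg : ContDiffAt ℝ 2 g x) :
    lap (fun z => f z + g z) x = lap f x + lap g x := by
  have hpd : ∀ i, pd i (fun z => f z + g z) =ᶠ[𝓝 x] fun z => pd i f z + pd i g z := fun i => by
    filter_upwards [hf.eventually_differentiableAt, hg.eventually_differentiableAt]
      with z hfz hgz using pd_add hfz hgz i
  simp only [lap, (hpd _).pd_eq, pd_add (hf.differentiableAt_pd _) (hg.differentiableAt_pd _),
    Finset.sum_add_distrib]

lemma lap_add_const (c : ℝ) : lap (fun z => f z + c) = lap f := by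
  ext z
  simp only [lap, pd_add_const]

lemma lap_log (hf : ContDiffAt ℝ 2 f x) (hx : f x ≠ 0) :
    lap (fun z => Real.log (f z)) x = lap f x / f x - (∑ i, pd i f x ^ 2) / f x ^ 2 := by
  have hpd : ∀ i, pd i (fun z => Real.log (f z)) =ᶠ[𝓝 x] fun z => pd i f z * (f z)⁻¹ :=
    fun i => by
      filter_upwards [hf.eventually_differentiableAt, hf.continuousAt.eventually_ne hx]
        with z hfz hz using pd_log hfz hz i
  have hfx := hf.differentiableAt (by norm_num)
  simp only [lap, (hpd _).pd_eq, Finset.sum_div, ← Finset.sum_sub_distrib]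
  refine Finset.sum_congr rfl fun i _ => ?_
  rw [pd_mul (hf.differentiableAt_pd i) (hfx.fun_inv hx), pd_inv hfx hx]
  field_simp
  ring

end Laplacian

section Distance

variable {x y : E3}

lemma contDiffAt_norm_sub (hx : x ≠ y) {n : WithTop ℕ∞} :
    ContDiffAt ℝ n (fun z => ‖z - y‖) x :=
  (contDiffAt_id.sub contDiffAt_const).norm ℝ (sub_ne_zero.2 hx)

lemma differentiableAt_norm_sub (hx : x ≠ y) : DifferentiableAt ℝ (fun z => ‖z - y‖) x :=
  (contDiffAt_norm_sub hx (n := 1)).differentiableAt one_ne_zero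

lemma pd_norm_sub (hx : x ≠ y) (i : Fin 3) :
    pd i (fun z => ‖z - y‖) x = (x - y) i * ‖x - y‖⁻¹ := by
  have hr : ‖x - y‖ ≠ 0 := norm_ne_zero_iff.2 (sub_ne_zero.2 hx)
  have h := ((hasFDerivAt_id x).sub_const y).norm_sq.sqrt (pow_ne_zero 2 hr)
  simp only [id_eq, Real.sqrt_sq (norm_nonneg _)] at h
  rw [h.pd_eq i]
  simp only [ContinuousLinearMap.comp_id, smul_apply, coe_innerSL_apply, inner_e3_right,
    nsmul_eq_mul, Nat.cast_ofNat, smul_eq_mul]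
  field_simp

lemma lap_norm_sub (hx : x ≠ y) : lap (fun z => ‖z - y‖) x = 2 / ‖x - y‖ := by
  have hr : ‖x - y‖ ≠ 0 := norm_ne_zero_iff.2 (sub_ne_zero.2 hx)
  have hpd : ∀ i, pd i (fun z => ‖z - y‖) =ᶠ[𝓝 x] fun z => (z - y) i * ‖z - y‖⁻¹ :=
    fun i => (eventually_ne_nhds hx).mono fun z hz => pd_norm_sub hz i
  have hd := differentiableAt_norm_sub hx
  have hcoord (i : Fin 3) : DifferentiableAt ℝ (fun z : E3 => (z - y) i) x := by fun_prop
  simp only [lap, (hpd _).pd_eq, fun i => pd_mul (hcoord i) (hd.fun_inv hr), pd_sub_const_apply,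
    pd_inv hd hr, pd_norm_sub hx]
  have hsq := EuclideanSpace.real_norm_sq_eq (x - y)
  rw [Fin.sum_univ_three] at hsq ⊢
  field_simp
  linear_combination hsq

lemma sum_sq_pd_norm_sub_add_norm_sub {y₁ y₂ : E3} (hx₁ : x ≠ y₁) (hx₂ : x ≠ y₂) :
    ∑ i, pd i (fun z => ‖z - y₁‖ + ‖z - y₂‖) x ^ 2
      = ((‖x - y₁‖ + ‖x - y₂‖) ^ 2 - ‖y₁ - y₂‖ ^ 2) / (‖x - y₁‖ * ‖x - y₂‖) := by
  have hr₁ : ‖x - y₁‖ ≠ 0 := norm_ne_zero_iff.2 (sub_ne_zero.2 hx₁)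
  have hr₂ : ‖x - y₂‖ ≠ 0 := norm_ne_zero_iff.2 (sub_ne_zero.2 hx₂)
  have hinner : ⟪x - y₁, x - y₂⟫ = (‖x - y₁‖ ^ 2 + ‖x - y₂‖ ^ 2 - ‖y₁ - y₂‖ ^ 2) / 2 := by
    have h := norm_sub_sq_real (x - y₁) (x - y₂)
    rw [sub_sub_sub_cancel_left, norm_sub_rev] at h
    linarith
  have h₁ := EuclideanSpace.real_norm_sq_eq (x - y₁)
  have h₂ := EuclideanSpace.real_norm_sq_eq (x - y₂)
  simp only [pd_add (differentiableAt_norm_sub hx₁) (differentiableAt_norm_sub hx₂),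
    pd_norm_sub hx₁, pd_norm_sub hx₂]
  rw [PiLp.inner_apply] at hinner
  simp only [Fin.sum_univ_three, RCLike.inner_apply, conj_trivial] at h₁ h₂ hinner ⊢
  field_simp
  linear_combination 2 * ‖x - y₁‖ * ‖x - y₂‖ * hinner - ‖x - y₂‖ ^ 2 * h₁ - ‖x - y₁‖ ^ 2 * h₂

end Distance

theorem laplacian_log_kernel_general (y1 y2 : E3) (x : E3)
    (hx1 : x ≠ y1) (hx2 : x ≠ y2) :
    lap (fun z => Real.log (‖z - y1‖ + ‖z - y2‖ + ‖y1 - y2‖)) x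
      = 1 / (‖x - y1‖ * ‖x - y2‖) := by
  have hr1 : 0 < ‖x - y1‖ := norm_pos_iff.2 (sub_ne_zero.2 hx1)
  have hr2 : 0 < ‖x - y2‖ := norm_pos_iff.2 (sub_ne_zero.2 hx2)
  have hsmooth : ContDiffAt ℝ 2 (fun z => ‖z - y1‖ + ‖z - y2‖) x :=
    (contDiffAt_norm_sub hx1).add (contDiffAt_norm_sub hx2)
  rw [lap_log (hsmooth.add contDiffAt_const) (by positivity), lap_add_const]
  simp only [pd_add_const]
  rw [lap_add (contDiffAt_norm_sub hx1) (contDiffAt_norm_sub hx2), lap_norm_sub hx1,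
    lap_norm_sub hx2, sum_sq_pd_norm_sub_add_norm_sub hx1 hx2]
  field_simp
  ring

/-- Δ log(r1 + r2 + r12) = 1/(r1 r2) away from the segment. -/
theorem laplacian_log_kernel (y1 y2 : E3) (hy : y1 ≠ y2) (x : E3)
    (hx1 : x ≠ y1) (hx2 : x ≠ y2)
    (hseg : ‖x - y1‖ + ‖x - y2‖ > ‖y1 - y2‖) :
    lap (fun z => Real.log (‖z - y1‖ + ‖z - y2‖ + ‖y1 - y2‖)) x
      = 1 / (‖x - y1‖ * ‖x - y2‖) :=
  laplacian_log_kernel_general y1 y2 x hx1 hx2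
end
end

section
/- With g = ln(r1 + r2 + r12) as above, the contracted double derivative D g ≡ ∑ᵢ ∂²g/∂y1^i ∂y2^i equals 1/(2 r1 r2) − 1/(2 r1 r12) − 1/(2 r2 r12), for x ≠ y1, x ≠ y2, y1 ≠ y2. -/
/-!
Write `S = r₁ + r₂ + r₁₂` for the perimeter of the triangle `x y₁ y₂`. Then
`D (log S) = D S / S - ⟪∇_{y₂} S, ∇_{y₁} S⟫ / S²`, and since only `r₁₂` depends on both points,
`D S = D r₁₂ = -(n - 1) / r₁₂` in dimension `n`. Both gradients are sums of unit vectors along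
the sides, so the law of cosines gives
`⟪∇_{y₂} S, ∇_{y₁} S⟫ = S ((r₁ - r₂)² - r₁₂²) / (2 r₁ r₂ r₁₂)`; for `n = 3` the two terms
combine to `(r₁₂ - r₁ - r₂) / (2 r₁ r₂ r₁₂)`.
-/

noncomputable section

/-- Mixed second partial derivative `∂²f/∂y1^i ∂y2^j` of a function of two points. -/
def d12 (i j : Fin 3) (f : E3 → E3 → ℝ) (y1 y2 : E3) : ℝ :=
  fderiv ℝ (fun z1 => fderiv ℝ (f z1) y2 (e3 j)) y1 (e3 i)

open scoped RealInnerProductSpace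

section Perimeter

variable {F : Type*} [NormedAddCommGroup F]

def perimeter (x y z : F) : ℝ := ‖x - y‖ + ‖x - z‖ + ‖y - z‖

theorem perimeter_pos {x z : F} (h : x ≠ z) (y : F) : 0 < perimeter x y z := by
  have := norm_pos_iff.2 (sub_ne_zero.2 h)
  unfold perimeter
  positivity

variable [InnerProductSpace ℝ F]

theorem hasFDerivAt_norm_sub_const {a p : F} (h : p ≠ a) :
    HasFDerivAt (fun z : F => ‖z - a‖) (‖p - a‖⁻¹ • innerSL ℝ (p - a)) p := by
  have hpos : 0 < ‖p - a‖ := norm_pos_iff.2 (sub_ne_zero.2 h)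
  have hsq : HasFDerivAt (fun z : F => ‖z - a‖ ^ 2) (2 • innerSL ℝ (p - a)) p := by
    simpa using ((hasFDerivAt_id p).sub_const a).norm_sq
  have hsqrt := (Real.hasDerivAt_sqrt (pow_pos hpos 2).ne').comp_hasFDerivAt p hsq
  simp only [Function.comp_def, Real.sqrt_sq (norm_nonneg _)] at hsqrt
  refine hsqrt.congr_fderiv ?_
  ext u
  simp only [smul_apply, nsmul_eq_mul, Nat.cast_ofNat, smul_eq_mul]
  field_simp

theorem hasFDerivAt_norm_const_sub {a p : F} (h : p ≠ a) :
    HasFDerivAt (fun z : F => ‖a - z‖) (‖a - p‖⁻¹ • innerSL ℝ (p - a)) p := by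
  simpa only [norm_sub_rev a] using hasFDerivAt_norm_sub_const h

theorem hasFDerivAt_inner_normalize_sub {a p : F} (h : p ≠ a) (v : F) :
    HasFDerivAt (fun z : F => ⟪‖z - a‖⁻¹ • (z - a), v⟫)
      (‖p - a‖⁻¹ • innerSL ℝ v - (⟪p - a, v⟫ / ‖p - a‖ ^ 3) • innerSL ℝ (p - a)) p := by
  have hpos : 0 < ‖p - a‖ := norm_pos_iff.2 (sub_ne_zero.2 h)
  have hinv := (hasDerivAt_inv hpos.ne').comp_hasFDerivAt p (hasFDerivAt_norm_sub_const h)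
  have hlin : HasFDerivAt (fun z : F => ⟪z - a, v⟫) (innerSL ℝ v) p := by
    refine ((innerSL ℝ v).hasFDerivAt.sub_const ⟪v, a⟫).congr_of_eventuallyEq
      (.of_forall fun z => ?_)
    simp [inner_sub_left, real_inner_comm]
  simp only [real_inner_smul_left]
  refine (hinv.mul hlin).congr_fderiv ?_
  ext u
  simp only [Function.comp_apply, add_apply, sub_apply, smul_apply, innerSL_apply_apply,
    smul_eq_mul]
  field_simp
  ring

def perimeterGradFst (x y z : F) : F := ‖x - y‖⁻¹ • (y - x) + ‖y - z‖⁻¹ • (y - z)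

def perimeterGradSnd (x y z : F) : F := ‖x - z‖⁻¹ • (z - x) + ‖y - z‖⁻¹ • (z - y)

theorem hasFDerivAt_perimeter_fst {x y z : F} (hx : x ≠ y) (hz : y ≠ z) :
    HasFDerivAt (fun y' => perimeter x y' z) (innerSL ℝ (perimeterGradFst x y z)) y := by
  have := ((hasFDerivAt_norm_const_sub hx.symm).add_const ‖x - z‖).add
    (hasFDerivAt_norm_sub_const hz)
  refine this.congr_fderiv ?_
  simp only [perimeterGradFst, map_add, map_smul]

theorem hasFDerivAt_perimeter_snd {x y z : F} (hx : x ≠ z) (hy : y ≠ z) :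
    HasFDerivAt (fun z' => perimeter x y z') (innerSL ℝ (perimeterGradSnd x y z)) z := by
  have := ((hasFDerivAt_norm_const_sub hx.symm).const_add ‖x - y‖).add
    (hasFDerivAt_norm_const_sub hy.symm)
  refine this.congr_fderiv ?_
  simp only [perimeterGradSnd, map_add, map_smul]

theorem fderiv_log_perimeter_snd {x y z : F} (hx : x ≠ z) (hy : y ≠ z) (v : F) :
    fderiv ℝ (fun z' => Real.log (perimeter x y z')) z v =
      ⟪perimeterGradSnd x y z, v⟫ / perimeter x y z := by
  rw [((hasFDerivAt_perimeter_snd hx hy).log (perimeter_pos hx y).ne').fderiv]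
  simp [div_eq_inv_mul]

theorem fderiv_fderiv_log_perimeter {x y₁ y₂ : F} (h₁ : x ≠ y₁) (h₂ : x ≠ y₂) (h₁₂ : y₁ ≠ y₂)
    (u v : F) :
    fderiv ℝ (fun y => fderiv ℝ (fun z => Real.log (perimeter x y z)) y₂ v) y₁ u =
      (⟪y₁ - y₂, u⟫ * ⟪y₁ - y₂, v⟫ / ‖y₁ - y₂‖ ^ 3 - ⟪u, v⟫ / ‖y₁ - y₂‖) / perimeter x y₁ y₂
        - ⟪perimeterGradSnd x y₁ y₂, v⟫ * ⟪perimeterGradFst x y₁ y₂, u⟫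
          / perimeter x y₁ y₂ ^ 2 := by
  have hnum : HasFDerivAt (fun y => ⟪perimeterGradSnd x y y₂, v⟫)
      (-(‖y₁ - y₂‖⁻¹ • innerSL ℝ v - (⟪y₁ - y₂, v⟫ / ‖y₁ - y₂‖ ^ 3) • innerSL ℝ (y₁ - y₂))) y₁ := by
    have := (hasFDerivAt_inner_normalize_sub h₁₂ v).const_sub ⟪‖x - y₂‖⁻¹ • (y₂ - x), v⟫
    refine this.congr_of_eventuallyEq (.of_forall fun y => ?_)
    dsimp only
    rw [perimeterGradSnd, inner_add_left, ← neg_sub y, smul_neg, inner_neg_left, ← sub_eq_add_neg]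
  have hden := (hasDerivAt_inv (perimeter_pos h₂ y₁).ne').comp_hasFDerivAt y₁
    (hasFDerivAt_perimeter_fst h₁ h₁₂)
  have hquot : HasFDerivAt (fun y => ⟪perimeterGradSnd x y y₂, v⟫ * (perimeter x y y₂)⁻¹) _ y₁ :=
    hnum.mul hden
  have heq : (fun y => fderiv ℝ (fun z => Real.log (perimeter x y z)) y₂ v) =ᶠ[nhds y₁]
      fun y => ⟪perimeterGradSnd x y y₂, v⟫ * (perimeter x y y₂)⁻¹ :=
    (eventually_ne_nhds h₁₂).mono fun y hy =>
      (fderiv_log_perimeter_snd h₂ hy v).trans (div_eq_mul_inv _ _)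
  rw [heq.fderiv_eq, hquot.fderiv]
  have := perimeter_pos h₂ y₁
  have := norm_pos_iff.2 (sub_ne_zero.2 h₁₂)
  simp only [add_apply, smul_apply, neg_apply, sub_apply, innerSL_apply_apply, smul_eq_mul,
    real_inner_comm u v]
  field_simp
  ring

theorem sum_fderiv_fderiv_log_perimeter {ι : Type*} [Fintype ι] (b : OrthonormalBasis ι ℝ F)
    {x y₁ y₂ : F} (h₁ : x ≠ y₁) (h₂ : x ≠ y₂) (h₁₂ : y₁ ≠ y₂) :
    ∑ i, fderiv ℝ (fun y => fderiv ℝ (fun z => Real.log (perimeter x y z)) y₂ (b i)) y₁ (b i) =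
      (1 - Fintype.card ι) / (‖y₁ - y₂‖ * perimeter x y₁ y₂)
        - ⟪perimeterGradSnd x y₁ y₂, perimeterGradFst x y₁ y₂⟫ / perimeter x y₁ y₂ ^ 2 := by
  have hsum (p q : F) : ∑ i, ⟪p, b i⟫ * ⟪q, b i⟫ = ⟪p, q⟫ := by
    rw [← b.sum_inner_mul_inner p q]
    simp only [real_inner_comm _ q]
  simp only [fderiv_fderiv_log_perimeter h₁ h₂ h₁₂, b.inner_eq_one, Finset.sum_sub_distrib,
    ← Finset.sum_div, hsum, Finset.sum_const, Finset.card_univ, nsmul_eq_mul]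
  have := perimeter_pos h₂ y₁
  have := norm_pos_iff.2 (sub_ne_zero.2 h₁₂)
  rw [real_inner_self_eq_norm_sq]
  field_simp

theorem inner_perimeterGradSnd_perimeterGradFst {x y z : F} (hxy : x ≠ y) (hxz : x ≠ z)
    (hyz : y ≠ z) :
    ⟪perimeterGradSnd x y z, perimeterGradFst x y z⟫ =
      perimeter x y z * ((‖x - y‖ - ‖x - z‖) ^ 2 - ‖y - z‖ ^ 2)
        / (2 * ‖x - y‖ * ‖x - z‖ * ‖y - z‖) := by
  have hcos : ⟪y - x, z - x⟫ = (‖x - y‖ ^ 2 + ‖x - z‖ ^ 2 - ‖y - z‖ ^ 2) / 2 := by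
    rw [real_inner_eq_norm_mul_self_add_norm_mul_self_sub_norm_sub_mul_self_div_two,
      sub_sub_sub_cancel_right, norm_sub_rev y x, norm_sub_rev z x]
    ring
  have hy : ⟪y - x, y - x⟫ = ‖x - y‖ ^ 2 := by rw [real_inner_self_eq_norm_sq, norm_sub_rev]
  have hz : ⟪z - x, z - x⟫ = ‖x - z‖ ^ 2 := by rw [real_inner_self_eq_norm_sq, norm_sub_rev]
  have h1 := norm_pos_iff.2 (sub_ne_zero.2 hxy)
  have h2 := norm_pos_iff.2 (sub_ne_zero.2 hxz)
  have h12 := norm_pos_iff.2 (sub_ne_zero.2 hyz)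
  simp only [perimeter, perimeterGradSnd, perimeterGradFst]
  generalize ‖x - y‖ = r₁ at *
  generalize ‖x - z‖ = r₂ at *
  generalize ‖y - z‖ = r₁₂ at *
  rw [show z - y = (z - x) - (y - x) by abel, show y - z = (y - x) - (z - x) by abel]
  generalize y - x = p at *
  generalize z - x = q at *
  simp only [inner_add_left, inner_add_right, inner_sub_left, inner_sub_right,
    real_inner_smul_left, real_inner_smul_right, real_inner_comm p q, hcos, hy, hz]
  field_simp
  ring

end Perimeter

/-- `D g = 1/(2 r1 r2) − 1/(2 r1 r12) − 1/(2 r2 r12)`. -/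
theorem Dg_formula (x y1 y2 : E3)
    (h1 : x ≠ y1) (h2 : x ≠ y2) (h12 : y1 ≠ y2) :
    (∑ i, d12 i i (fun z1 z2 => Real.log (‖x - z1‖ + ‖x - z2‖ + ‖z1 - z2‖)) y1 y2) =
      1 / (2 * ‖x - y1‖ * ‖x - y2‖) - 1 / (2 * ‖x - y1‖ * ‖y1 - y2‖)
        - 1 / (2 * ‖x - y2‖ * ‖y1 - y2‖) := by
  have hbasis : ∀ i, e3 i = EuclideanSpace.basisFun (Fin 3) ℝ i := fun i =>
    (EuclideanSpace.basisFun_apply (Fin 3) ℝ i).symm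
  simp only [d12, hbasis]
  refine (sum_fderiv_fderiv_log_perimeter _ h1 h2 h12).trans ?_
  rw [inner_perimeterGradSnd_perimeterGradFst h1 h2 h12, Fintype.card_fin]
  have := norm_pos_iff.2 (sub_ne_zero.2 h1)
  have := norm_pos_iff.2 (sub_ne_zero.2 h2)
  have := norm_pos_iff.2 (sub_ne_zero.2 h12)
  have := perimeter_pos h2 y1
  field_simp
  simp only [perimeter]
  ring
end
end

section
/- Fix distinct y1, y2 ∈ ℝ³ and let s_{ij}(x) = ∂²g/∂y1^{<i}∂y2^{j>} with g = ln(r1+r2+r12). Then s_{ij} extends continuously to x = y1, with limit value as x → y1 (along direction n1 = (x−y1)/|x−y1| fixed) equal to (1/r12²)(n12^{<i}n12^{j>} − ½ n1^{<i}n12^{j>}). -/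
noncomputable section
open Filter

/-- `ᵢg_ⱼ` as a function of the field point `x`. -/
def gmix (y1 y2 : E3) (i j : Fin 3) (x : E3) : ℝ :=
  d12 i j (fun z1 z2 => Real.log (‖x - z1‖ + ‖x - z2‖ + ‖z1 - z2‖)) y1 y2

/-- The STF generating function `s_{ij}(x)`. -/
def sTF (y1 y2 : E3) (i j : Fin 3) (x : E3) : ℝ :=
  (gmix y1 y2 i j x + gmix y1 y2 j i x) / 2
    - (1 / 3) * (if i = j then (1:ℝ) else 0) * ∑ k, gmix y1 y2 k k x

/-- STF part of `u^i v^j` for vectors given componentwise. -/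
def stf2 (u v : Fin 3 → ℝ) (i j : Fin 3) : ℝ :=
  (u i * v j + u j * v i) / 2
    - (1 / 3) * (if i = j then (1:ℝ) else 0) * ∑ k, u k * v k

/-! Differentiating `g = log P`, `P = r1 + r2 + r12`, first in `y2` and then in `y1` gives, with the
unit vectors `n1 = (x - y1)/r1`, `n2 = (x - y2)/r2`, `n12 = (y1 - y2)/r12`,
`∂²g/∂y1^i∂y2^j = (n12^i - n1^i)(n12^j + n2^j)/P² - (δ^{ij} - n12^i n12^j)/(r12 P)`,
the last term being the derivative of the unit vector `n12`. Along the ray `x = y1 + t n1` the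
vector `n1` stays fixed while `n2 → n12` and `P → 2 r12`, so the mixed derivative tends to
`(2 n12^i n12^j - n1^i n12^j - δ^{ij})/(2 r12²)`, and the STF projection annihilates `δ^{ij}`. -/

open scoped RealInnerProductSpace Topology

theorem HasFDerivAt.fun_div {𝕜 E : Type*} [NontriviallyNormedField 𝕜] [NormedAddCommGroup E]
    [NormedSpace 𝕜 E] {c d : E → 𝕜} {c' d' : E →L[𝕜] 𝕜} {x : E}
    (hc : HasFDerivAt c c' x) (hd : HasFDerivAt d d' x) (hx : d x ≠ 0) :
    HasFDerivAt (fun y => c y / d y) ((d x)⁻¹ • c' - (c x / d x ^ 2) • d') x := by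
  have hinv : HasFDerivAt (fun y => (d y)⁻¹) _ x := (hasDerivAt_inv hx).comp_hasFDerivAt x hd
  simp only [div_eq_mul_inv]
  refine (hc.fun_mul hinv).congr_fderiv ?_
  ext v
  simp
  ring

section InnerProductSpace

variable {F : Type*} [NormedAddCommGroup F] [InnerProductSpace ℝ F]

theorem hasFDerivAt_norm {x : F} (hx : x ≠ 0) :
    HasFDerivAt (fun y : F => ‖y‖) (‖x‖⁻¹ • innerSL ℝ x) x := by
  have hsq := (hasStrictFDerivAt_norm_sq x).hasFDerivAt.sqrt (pow_ne_zero 2 (norm_ne_zero_iff.2 hx))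
  simp only [Real.sqrt_sq (norm_nonneg _)] at hsq
  convert hsq using 1
  ext v
  have : ‖x‖ ≠ 0 := norm_ne_zero_iff.2 hx
  simp
  field_simp

theorem HasFDerivAt.norm {E : Type*} [NormedAddCommGroup E] [NormedSpace ℝ E] {f : E → F}
    {f' : E →L[ℝ] F} {x : E} (hf : HasFDerivAt f f' x) (h0 : f x ≠ 0) :
    HasFDerivAt (fun y => ‖f y‖) (‖f x‖⁻¹ • (innerSL ℝ (f x)).comp f') x :=
  (hasFDerivAt_norm h0).comp x hf

def logPerimeter (x z1 z2 : F) : ℝ := Real.log (‖x - z1‖ + ‖x - z2‖ + ‖z1 - z2‖)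

theorem fderiv_logPerimeter_apply {x z1 z2 : F} (hx : x ≠ z2) (hz : z1 ≠ z2) (w : F) :
    fderiv ℝ (logPerimeter x z1) z2 w =
      -(⟪x - z2, w⟫ / ‖x - z2‖ + ⟪z1 - z2, w⟫ / ‖z1 - z2‖) /
        (‖x - z1‖ + ‖x - z2‖ + ‖z1 - z2‖) := by
  have hr2 : ‖x - z2‖ ≠ 0 := norm_ne_zero_iff.2 (sub_ne_zero.2 hx)
  have hr12 : ‖z1 - z2‖ ≠ 0 := norm_ne_zero_iff.2 (sub_ne_zero.2 hz)
  have hP : ‖x - z1‖ + ‖x - z2‖ + ‖z1 - z2‖ ≠ 0 := by positivity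
  have h : HasFDerivAt (logPerimeter x z1) _ z2 := (((hasFDerivAt_const ‖x - z1‖ z2).fun_add
    (((hasFDerivAt_id z2).const_sub x).norm (sub_ne_zero.2 hx))).fun_add
    (((hasFDerivAt_id z2).const_sub z1).norm (sub_ne_zero.2 hz))).log hP
  rw [h.fderiv]
  simp [inner_sub_left]
  field_simp
  ring

theorem hasFDerivAt_inner_div_norm {z : F} (hz : z ≠ 0) (w : F) :
    HasFDerivAt (fun y => ⟪y, w⟫ / ‖y‖)
      (‖z‖⁻¹ • innerSL ℝ w - (⟪z, w⟫ / ‖z‖ ^ 2) • (‖z‖⁻¹ • innerSL ℝ z)) z := by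
  have h : HasFDerivAt (fun y => ⟪y, w⟫ / ‖y‖) _ z :=
    ((hasFDerivAt_id z).inner ℝ (hasFDerivAt_const w z)).fun_div (hasFDerivAt_norm hz)
      (norm_ne_zero_iff.2 hz)
  refine h.congr_fderiv ?_
  ext v
  simp [real_inner_comm]

theorem fderiv_fderiv_logPerimeter_apply {x y1 y2 : F} (hx1 : x ≠ y1) (hx2 : x ≠ y2)
    (h12 : y1 ≠ y2) (v w : F) :
    fderiv ℝ (fun z1 => fderiv ℝ (logPerimeter x z1) y2 w) y1 v =
      (⟪y1 - y2, v⟫ / ‖y1 - y2‖ - ⟪x - y1, v⟫ / ‖x - y1‖) *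
          (⟪y1 - y2, w⟫ / ‖y1 - y2‖ + ⟪x - y2, w⟫ / ‖x - y2‖) /
          (‖x - y1‖ + ‖x - y2‖ + ‖y1 - y2‖) ^ 2
        - (⟪v, w⟫ - ⟪y1 - y2, v⟫ * ⟪y1 - y2, w⟫ / ‖y1 - y2‖ ^ 2) /
          (‖y1 - y2‖ * (‖x - y1‖ + ‖x - y2‖ + ‖y1 - y2‖)) := by
  have hr1 : ‖x - y1‖ ≠ 0 := norm_ne_zero_iff.2 (sub_ne_zero.2 hx1)
  have hr12 : ‖y1 - y2‖ ≠ 0 := norm_ne_zero_iff.2 (sub_ne_zero.2 h12)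
  have hP0 : ‖x - y1‖ + ‖x - y2‖ + ‖y1 - y2‖ ≠ 0 := by positivity
  have hP : HasFDerivAt (fun z1 => ‖x - z1‖ + ‖x - y2‖ + ‖z1 - y2‖) _ y1 :=
    ((((hasFDerivAt_id y1).const_sub x).norm (sub_ne_zero.2 hx1)).fun_add
      (hasFDerivAt_const _ y1)).fun_add (((hasFDerivAt_id y1).sub_const y2).norm (sub_ne_zero.2 h12))
  have hN : HasFDerivAt (fun z1 => -(⟪x - y2, w⟫ / ‖x - y2‖ + ⟪z1 - y2, w⟫ / ‖z1 - y2‖)) _ y1 :=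
    (((hasFDerivAt_inner_div_norm (sub_ne_zero.2 h12) w).comp y1
      ((hasFDerivAt_id y1).sub_const y2)).const_add _).neg
  have hinner : (fun z1 => fderiv ℝ (logPerimeter x z1) y2 w) =ᶠ[𝓝 y1]
      fun z1 => -(⟪x - y2, w⟫ / ‖x - y2‖ + ⟪z1 - y2, w⟫ / ‖z1 - y2‖) /
        (‖x - z1‖ + ‖x - y2‖ + ‖z1 - y2‖) :=
    (eventually_ne_nhds h12).mono fun z1 hz1 => fderiv_logPerimeter_apply hx2 hz1 w
  rw [hinner.fderiv_eq, (hN.fun_div hP hP0).fderiv]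
  simp [inner_sub_left, real_inner_comm]
  field_simp
  ring

theorem tendsto_fderiv_fderiv_logPerimeter_ray {y1 y2 u : F} (h12 : y1 ≠ y2) (hu : ‖u‖ = 1)
    (v w : F) :
    Tendsto (fun t : ℝ => fderiv ℝ (fun z1 => fderiv ℝ (logPerimeter (y1 + t • u) z1) y2 w) y1 v)
      (𝓝[>] 0)
      (𝓝 ((2 * ⟪y1 - y2, v⟫ * ⟪y1 - y2, w⟫ / ‖y1 - y2‖ ^ 2
        - ⟪u, v⟫ * ⟪y1 - y2, w⟫ / ‖y1 - y2‖ - ⟪v, w⟫) / (2 * ‖y1 - y2‖ ^ 2))) := by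
  have hr : ‖y1 - y2‖ ≠ 0 := norm_ne_zero_iff.2 (sub_ne_zero.2 h12)
  -- On the ray `(x - y1) / ‖x - y1‖ = u`; freezing it makes the formula continuous at `y1`.
  set Ψ : F → ℝ := fun x =>
    (⟪y1 - y2, v⟫ / ‖y1 - y2‖ - ⟪u, v⟫) * (⟪y1 - y2, w⟫ / ‖y1 - y2‖ + ⟪x - y2, w⟫ / ‖x - y2‖) /
        (‖x - y1‖ + ‖x - y2‖ + ‖y1 - y2‖) ^ 2
      - (⟪v, w⟫ - ⟪y1 - y2, v⟫ * ⟪y1 - y2, w⟫ / ‖y1 - y2‖ ^ 2) /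
        (‖y1 - y2‖ * (‖x - y1‖ + ‖x - y2‖ + ‖y1 - y2‖)) with hΨ
  have hP : ‖y1 - y1‖ + ‖y1 - y2‖ + ‖y1 - y2‖ ≠ 0 := by simp [hr]
  have hcont : ContinuousAt Ψ y1 := by
    fun_prop (disch := first | assumption | positivity)
  have hray : Tendsto (fun t : ℝ => y1 + t • u) (𝓝[>] 0) (𝓝 y1) :=
    ((continuous_const.add (continuous_id.smul continuous_const)).tendsto' 0 y1 (by simp)).mono_left
      nhdsWithin_le_nhds
  have hclose : Set.Ioo (0 : ℝ) ‖y1 - y2‖ ∈ 𝓝[>] 0 :=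
    Ioo_mem_nhdsGT (norm_pos_iff.2 (sub_ne_zero.2 h12))
  have heq : ∀ t ∈ Set.Ioo (0 : ℝ) ‖y1 - y2‖,
      Ψ (y1 + t • u) = fderiv ℝ (fun z1 => fderiv ℝ (logPerimeter (y1 + t • u) z1) y2 w) y1 v := by
    rintro t ⟨ht0, htr⟩
    have ht : ‖t • u‖ = t := by simp [norm_smul, hu, ht0.le]
    have hx1 : y1 + t • u ≠ y1 := by
      rw [Ne, add_eq_left]
      rintro h
      rw [h, norm_zero] at ht
      exact ht0.ne ht
    have hx2 : y1 + t • u ≠ y2 := by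
      rintro rfl
      rw [sub_add_cancel_left, norm_neg, ht] at htr
      exact htr.false
    rw [fderiv_fderiv_logPerimeter_apply hx1 hx2 h12, hΨ]
    simp [ht, inner_smul_left, ht0.ne']
  have hval : Ψ y1 = (2 * ⟪y1 - y2, v⟫ * ⟪y1 - y2, w⟫ / ‖y1 - y2‖ ^ 2
      - ⟪u, v⟫ * ⟪y1 - y2, w⟫ / ‖y1 - y2‖ - ⟪v, w⟫) / (2 * ‖y1 - y2‖ ^ 2) := by
    simp only [hΨ, sub_self, norm_zero, zero_add]
    field_simp
    ring
  rw [← hval]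
  exact (hcont.tendsto.comp hray).congr' (eventually_of_mem hclose heq)

end InnerProductSpace

theorem gmix_eq_fderiv_fderiv_logPerimeter (y1 y2 : E3) (i j : Fin 3) (x : E3) :
    gmix y1 y2 i j x = fderiv ℝ (fun z1 => fderiv ℝ (logPerimeter x z1) y2 (e3 j)) y1 (e3 i) :=
  rfl

theorem tendsto_gmix_ray {y1 y2 n1 : E3} (hy : y1 ≠ y2) (hn1 : ‖n1‖ = 1) (i j : Fin 3) :
    Tendsto (fun t : ℝ => gmix y1 y2 i j (y1 + t • n1)) (𝓝[>] 0)
      (𝓝 ((2 * (y1 - y2) i * (y1 - y2) j / ‖y1 - y2‖ ^ 2 - n1 i * (y1 - y2) j / ‖y1 - y2‖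
        - if i = j then 1 else 0) / (2 * ‖y1 - y2‖ ^ 2))) := by
  simp only [gmix_eq_fderiv_fderiv_logPerimeter]
  convert tendsto_fderiv_fderiv_logPerimeter_ray hy hn1 (e3 i) (e3 j) using 4
  all_goals simp [e3, EuclideanSpace.inner_single_right, eq_comm]

/-- limit of `s_{ij}` as `x → y1` along a fixed direction `n1`. -/
theorem sTF_limit_at_puncture (y1 y2 : E3) (hy : y1 ≠ y2)
    (n1 : E3) (hn1 : ‖n1‖ = 1) (i j : Fin 3) :
    Tendsto (fun t : ℝ => sTF y1 y2 i j (y1 + t • n1)) (nhdsWithin 0 (Set.Ioi 0))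
      (nhds ((1 / ‖y1 - y2‖ ^ 2) *
        (stf2 (fun k => (y1 - y2) k / ‖y1 - y2‖) (fun k => (y1 - y2) k / ‖y1 - y2‖) i j
          - (1 / 2) * stf2 (fun k => n1 k) (fun k => (y1 - y2) k / ‖y1 - y2‖) i j))) := by
  have hr : ‖y1 - y2‖ ≠ 0 := norm_ne_zero_iff.2 (sub_ne_zero.2 hy)
  have h := tendsto_gmix_ray hy hn1
  have hsTF := (((h i j).add (h j i)).div_const 2).sub
    ((tendsto_const_nhds (x := (1 / 3 : ℝ) * if i = j then 1 else 0)).mul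
      (tendsto_finsetSum Finset.univ fun k _ => h k k))
  simp only [sTF]
  convert hsTF using 2
  obtain rfl | hij := eq_or_ne i j
  · simp [stf2, Fin.sum_univ_three]
    field_simp
    ring
  · simp [stf2, hij, hij.symm]
    field_simp
    ring
end
end
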